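/- Let K be a field of characteristic zero and let A be an essential supersolvable line arrangement in P² over K with a modular point p satisfying μ(p) = m − 1 ≥ 1, and write |A| = m + k with k ≥ 1. If k ≤ m, then n₂(A) ≥ k(m − k + 1). -/

import Mathlib

/-! Basic setup: the projective plane over a field `K` is modelled by linear
subspaces of `K³ = Fin 3 → K`: projective points are 1-dimensional subspaces
and projective lines are 2-dimensional subspaces; incidence is inclusion. -/

variable (K : Type*) [Field K]

/-- A point of `P²`: a 1-dimensional linear subspace of `K³`. -/
def IsPoint (p : Submodule K (Fin 3 → K)) : Prop :=
  Module.finrank K p = 1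

/-- A line of `P²`: a 2-dimensional linear subspace of `K³`. -/
def IsLine (H : Submodule K (Fin 3 → K)) : Prop :=
  Module.finrank K H = 2

/-- A line arrangement: a finite set of lines in `P²`. -/
def IsArrangement (A : Finset (Submodule K (Fin 3 → K))) : Prop :=
  ∀ H ∈ A, IsLine K H

/-- An arrangement is essential if its lines have no common point. -/
def Essential (A : Finset (Submodule K (Fin 3 → K))) : Prop :=
  ¬ ∃ p : Submodule K (Fin 3 → K), IsPoint K p ∧ ∀ H ∈ A, p ≤ H

/-- The multiplicity of a point `p`: the number of lines of `A` passing through `p`. -/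
noncomputable def mult (A : Finset (Submodule K (Fin 3 → K)))
    (p : Submodule K (Fin 3 → K)) : ℕ :=
  {H ∈ (A : Set (Submodule K (Fin 3 → K))) | p ≤ H}.ncard

/-- An intersection point of `A`: a point lying on at least two lines of `A`. -/
def IsIntersectionPoint (A : Finset (Submodule K (Fin 3 → K)))
    (p : Submodule K (Fin 3 → K)) : Prop :=
  IsPoint K p ∧ 2 ≤ mult K A p

/-- A double point of `A`: a point lying on exactly two lines of `A`. -/
def IsDoublePoint (A : Finset (Submodule K (Fin 3 → K)))
    (p : Submodule K (Fin 3 → K)) : Prop :=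
  IsPoint K p ∧ mult K A p = 2

/-- `n₂(A)`: the number of double points of `A`. -/
noncomputable def n2 (A : Finset (Submodule K (Fin 3 → K))) : ℕ :=
  {p | IsDoublePoint K A p}.ncard

/-- `n₂(H)`: the number of double points of `A` lying on the line `H`. -/
noncomputable def n2on (A : Finset (Submodule K (Fin 3 → K)))
    (H : Submodule K (Fin 3 → K)) : ℕ :=
  {p | IsDoublePoint K A p ∧ p ≤ H}.ncard

/-- `|A^H|`: the number of intersection points of `A` lying on the line `H`. -/
noncomputable def pointsOn (A : Finset (Submodule K (Fin 3 → K)))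
    (H : Submodule K (Fin 3 → K)) : ℕ :=
  {p | IsIntersectionPoint K A p ∧ p ≤ H}.ncard

/-- `p` is a modular point of `A`: an intersection point such that for all distinct
lines `H, L` of `A` not passing through `p`, the point `H ∩ L` lies on some line
of `A` through `p`. -/
def IsModular (A : Finset (Submodule K (Fin 3 → K)))
    (p : Submodule K (Fin 3 → K)) : Prop :=
  IsIntersectionPoint K A p ∧
    ∀ H ∈ A, ∀ L ∈ A, ¬ p ≤ H → ¬ p ≤ L → H ≠ L →
      ∃ K' ∈ A, p ≤ K' ∧ H ⊓ L ≤ K'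

/-- An arrangement is supersolvable if it has a modular point. -/
def Supersolvable (A : Finset (Submodule K (Fin 3 → K))) : Prop :=
  ∃ p, IsModular K A p

/-!
Let `m = |A_p|` and let `L` be one of the `k` lines of `A` not through `p`. The `m` lines through
`p` cut `L` in `m` distinct points. Such a point that is not a double point lies on a third line
of `A`, which cannot pass through `p`, and different points of `L` need different third lines;
so at least `m - (k - 1)` of them are double points. A double point `L ⊓ W` with `p ≤ W` determines
the pair `(L, W)`, hence these `k (m - k + 1)` double points are all distinct.
-/

open Finset

open scoped Classical

variable {K}

noncomputable def linesThrough (A : Finset (Submodule K (Fin 3 → K)))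
    (p : Submodule K (Fin 3 → K)) : Finset (Submodule K (Fin 3 → K)) :=
  {H ∈ A | p ≤ H}

@[simp]
lemma mem_linesThrough {A : Finset (Submodule K (Fin 3 → K))} {p H : Submodule K (Fin 3 → K)} :
    H ∈ linesThrough A p ↔ H ∈ A ∧ p ≤ H :=
  mem_filter

lemma mult_eq_card_linesThrough (A : Finset (Submodule K (Fin 3 → K)))
    (p : Submodule K (Fin 3 → K)) : mult K A p = #(linesThrough A p) := by
  rw [mult, linesThrough, ← Set.ncard_coe_finset, coe_filter]
  rfl

lemma IsPoint.eq_of_le {p q : Submodule K (Fin 3 → K)} (hp : IsPoint K p) (hq : IsPoint K q)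
    (h : p ≤ q) : p = q :=
  Submodule.eq_of_le_of_finrank_eq h (hp.trans hq.symm)

lemma IsLine.isPoint_inf {H L : Submodule K (Fin 3 → K)} (hH : IsLine K H) (hL : IsLine K L)
    (hne : H ≠ L) : IsPoint K (H ⊓ L) := by
  have hsum := Submodule.finrank_sup_add_finrank_inf_eq H L
  have hsup : Module.finrank K ↥(H ⊔ L) ≤ 3 :=
    (Submodule.finrank_le _).trans_eq (Module.finrank_fin_fun K)
  have hsup' : ¬ Module.finrank K ↥(H ⊔ L) ≤ 2 := fun h ↦ hne <|
    (Submodule.eq_of_le_of_finrank_le le_sup_left (h.trans_eq hH.symm)).trans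
      (Submodule.eq_of_le_of_finrank_le le_sup_right (h.trans_eq hL.symm)).symm
  unfold IsLine at hH hL
  unfold IsPoint
  omega

lemma IsLine.inf_eq_of_le {q H L : Submodule K (Fin 3 → K)} (hq : IsPoint K q)
    (hH : IsLine K H) (hL : IsLine K L) (hne : H ≠ L) (hqH : q ≤ H) (hqL : q ≤ L) :
    H ⊓ L = q :=
  (hq.eq_of_le (hH.isPoint_inf hL hne) (le_inf hqH hqL)).symm

section Arrangement

variable {A : Finset (Submodule K (Fin 3 → K))}

lemma isDoublePoint_iff {q H L : Submodule K (Fin 3 → K)} (hq : IsPoint K q)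
    (hH : H ∈ A) (hL : L ∈ A) (hne : H ≠ L) (hqH : q ≤ H) (hqL : q ≤ L) :
    IsDoublePoint K A q ↔ ∀ G ∈ A, q ≤ G → G = H ∨ G = L := by
  have hsub : {H, L} ⊆ linesThrough A q := by simp [insert_subset_iff, *]
  rw [IsDoublePoint, mult_eq_card_linesThrough, and_iff_right hq, ← card_pair hne]
  constructor
  · intro hcard G hG hqG
    have hG' : G ∈ ({H, L} : Finset _) :=
      (eq_of_subset_of_card_le hsub hcard.le).symm ▸ mem_linesThrough.2 ⟨hG, hqG⟩
    simpa using hG'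
  · intro hthrough
    refine congrArg card (Subset.antisymm (fun G hG ↦ ?_) hsub)
    obtain ⟨hGA, hqG⟩ := mem_linesThrough.1 hG
    simpa using hthrough G hGA hqG

lemma finite_setOf_isDoublePoint (hA : IsArrangement K A) :
    {q | IsDoublePoint K A q}.Finite := by
  refine (A.finite_toSet.image2 (· ⊓ ·) A.finite_toSet).subset fun q ⟨hq, hmult⟩ ↦ ?_
  rw [mult_eq_card_linesThrough] at hmult
  obtain ⟨H, L, hne, hHL⟩ := card_eq_two.1 hmult
  have hH := mem_linesThrough.1 (hHL ▸ mem_insert_self H {L})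
  have hL := mem_linesThrough.1 (hHL ▸ mem_insert_of_mem (mem_singleton_self L))
  exact ⟨H, hH.1, L, hL.1, (hA H hH.1).inf_eq_of_le hq (hA L hL.1) hne hH.2 hL.2⟩

lemma sum_card_filter_isDoublePoint_inf_le_n2 (hA : IsArrangement K A)
    {p : Submodule K (Fin 3 → K)} :
    ∑ L ∈ {H ∈ A | ¬ p ≤ H}, #{W ∈ linesThrough A p | IsDoublePoint K A (L ⊓ W)} ≤ n2 K A := by
  rw [← card_sigma, n2, ← Set.ncard_coe_finset]
  refine Set.ncard_le_ncard_of_injOn (fun x ↦ x.1 ⊓ x.2) (fun x hx ↦ ?_) ?_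
    (finite_setOf_isDoublePoint hA)
  · exact (mem_filter.1 (mem_sigma.1 hx).2).2
  · rintro ⟨L, W⟩ hx ⟨L', W'⟩ hx' (hinf : L ⊓ W = L' ⊓ W')
    simp only [coe_sigma, Set.mem_sigma_iff, coe_filter, Set.mem_ofPred_eq, mem_linesThrough]
      at hx hx'
    obtain ⟨⟨hLA, hpL⟩, ⟨hWA, hpW⟩, hdouble⟩ := hx
    obtain ⟨⟨hL'A, hpL'⟩, ⟨hW'A, hpW'⟩, -⟩ := hx'
    have hthrough := (isDoublePoint_iff hdouble.1 hLA hWA (fun h ↦ hpL (h ▸ hpW)) inf_le_left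
      inf_le_right).1 hdouble
    obtain rfl : L' = L :=
      (hthrough L' hL'A (hinf ▸ inf_le_left)).resolve_right fun h ↦ hpL' (h ▸ hpW)
    obtain rfl : W' = W :=
      (hthrough W' hW'A (hinf ▸ inf_le_right)).resolve_left fun h ↦ hpL (h ▸ hpW')
    rfl


variable (hA : IsArrangement K A) {p : Submodule K (Fin 3 → K)} (hp : IsPoint K p)
include hA hp

lemma injOn_inf_linesThrough {L : Submodule K (Fin 3 → K)} (hL : IsLine K L) (hpL : ¬ p ≤ L) :
    Set.InjOn (L ⊓ ·) (linesThrough A p) := by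
  intro W hW W' hW' (hinf : L ⊓ W = L ⊓ W')
  obtain ⟨hWA, hpW⟩ := mem_linesThrough.1 hW
  obtain ⟨hW'A, hpW'⟩ := mem_linesThrough.1 hW'
  by_contra hne
  have hWW' : W ⊓ W' = p := (hA W hWA).inf_eq_of_le hp (hA W' hW'A) hne hpW hpW'
  have hLW : L ≠ W := fun h ↦ hpL (h ▸ hpW)
  have hq : L ⊓ W = p := (hL.isPoint_inf (hA W hWA) hLW).eq_of_le hp
    (hWW' ▸ le_inf inf_le_right (hinf ▸ inf_le_right))
  exact hpL (hq ▸ inf_le_left)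

lemma card_filter_not_isDoublePoint_inf_lt {L : Submodule K (Fin 3 → K)} (hLA : L ∈ A)
    (hpL : ¬ p ≤ L) :
    #{W ∈ linesThrough A p | ¬ IsDoublePoint K A (L ⊓ W)} < #{H ∈ A | ¬ p ≤ H} := by
  have hL := hA L hLA
  have hLB : L ∈ ({H ∈ A | ¬ p ≤ H} : Finset _) := mem_filter.2 ⟨hLA, hpL⟩
  refine lt_of_le_of_lt ?_ (card_erase_lt_of_mem hLB)
  refine card_le_card_of_forall_subsingleton (fun W H ↦ L ⊓ W ≤ H) (fun W hW ↦ ?_) ?_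
  · obtain ⟨hWp, hnd⟩ := mem_filter.1 hW
    obtain ⟨hWA, hpW⟩ := mem_linesThrough.1 hWp
    have hLW : L ≠ W := fun h ↦ hpL (h ▸ hpW)
    rw [isDoublePoint_iff (hL.isPoint_inf (hA W hWA) hLW) hLA hWA hLW inf_le_left
      inf_le_right] at hnd
    push Not at hnd
    obtain ⟨H, hHA, hLWH, hHL, hHW⟩ := hnd
    refine ⟨H, mem_erase.2 ⟨hHL, mem_filter.2 ⟨hHA, fun hpH ↦ hpL ?_⟩⟩, hLWH⟩
    have hHWp : H ⊓ W = p := (hA H hHA).inf_eq_of_le hp (hA W hWA) hHW hpH hpW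
    have hLWp : L ⊓ W = p := (hL.isPoint_inf (hA W hWA) hLW).eq_of_le hp
      (hHWp ▸ le_inf hLWH inf_le_right)
    exact hLWp ▸ inf_le_left
  · intro H hH W hW W' hW'
    obtain ⟨hHL, hHA, -⟩ := mem_erase.1 hH |>.imp_right mem_filter.1
    have hpoint (V : Submodule K (Fin 3 → K)) (hV : V ∈ linesThrough A p) (hVH : L ⊓ V ≤ H) :
        L ⊓ H = L ⊓ V := by
      obtain ⟨hVA, hpV⟩ := mem_linesThrough.1 hV
      exact hL.inf_eq_of_le (hL.isPoint_inf (hA V hVA) fun h ↦ hpL (h ▸ hpV)) (hA H hHA) hHL.symm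
        inf_le_left hVH
    have hWp := (mem_filter.1 hW.1).1
    have hW'p := (mem_filter.1 hW'.1).1
    exact injOn_inf_linesThrough hA hp hL hpL hWp hW'p
      ((hpoint W hWp hW.2).symm.trans (hpoint W' hW'p hW'.2))

end Arrangement

theorem n2_lower_bound_of_supersolvable_k_le_m_general
    (K : Type*) [Field K]
    (A : Finset (Submodule K (Fin 3 → K)))
    (hA : IsArrangement K A)
    (p : Submodule K (Fin 3 → K)) (m k : ℕ)
    (hmod : IsModular K A p)
    (hm : mult K A p = m)
    (hcard : A.card = m + k) (hkm : k ≤ m) :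
    k * (m - k + 1) ≤ n2 K A := by
  have hp : IsPoint K p := hmod.1.1
  have hAp : #(linesThrough A p) = m := by rw [← hm, mult_eq_card_linesThrough]
  have hB : #{H ∈ A | ¬ p ≤ H} = k := by
    have := card_filter_add_card_filter_not (s := A) (p ≤ ·)
    rw [← linesThrough, hAp, hcard] at this
    omega
  calc k * (m - k + 1) = ∑ _L ∈ {H ∈ A | ¬ p ≤ H}, (m - k + 1) := by simp [hB]
    _ ≤ ∑ L ∈ {H ∈ A | ¬ p ≤ H}, #{W ∈ linesThrough A p | IsDoublePoint K A (L ⊓ W)} :=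
        sum_le_sum fun L hL ↦ by
          have hbad := card_filter_not_isDoublePoint_inf_lt hA hp (mem_filter.1 hL).1
            (mem_filter.1 hL).2
          have hsplit := card_filter_add_card_filter_not (s := linesThrough A p)
            fun W ↦ IsDoublePoint K A (L ⊓ W)
          omega
    _ ≤ n2 K A := sum_card_filter_isDoublePoint_inf_le_n2 hA

/-- **Corollary (lower bound, case `k ≤ m`).**
Let `A` be an essential supersolvable line arrangement over a field of
characteristic zero with modular point `p`, `μ(p) = m - 1 ≥ 1` (i.e. `|A_p| = m ≥ 2`),
and `|A| = m + k` with `1 ≤ k ≤ m`.  Then `n₂(A) ≥ k(m - k + 1)`. -/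
theorem n2_lower_bound_of_supersolvable_k_le_m
    (K : Type*) [Field K] [CharZero K]
    (A : Finset (Submodule K (Fin 3 → K)))
    (hA : IsArrangement K A) (hess : Essential K A)
    (p : Submodule K (Fin 3 → K)) (m k : ℕ)
    (hmod : IsModular K A p)
    (hm : mult K A p = m) (hm2 : 2 ≤ m)
    (hcard : A.card = m + k) (hk : 1 ≤ k) (hkm : k ≤ m) :
    k * (m - k + 1) ≤ n2 K A :=
  n2_lower_bound_of_supersolvable_k_le_m_general K A hA p m k hmod hm hcard hkm
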